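/- arXiv:1901.06407 — 3 statements merged into one kernel-verified Lean document; each statement's English description precedes it below -/
import Mathlib

section
/- In the model M_k, a state x satisfies the formula A_m = ⟨b⟩^m [b]⊥ ∧ ¬⟨b⟩^{m+1} [b]⊥ ∧ ⟨b⟩(⟨b⟩⊤ ∧ [b]⟨b⟩⊤) if and only if k = m and x is the root r_k. -/
/-- Formulas of basic modal logic: propositional variables, ⊥, →, and [b]. -/
inductive MF : Type where
  | var : ℕ → MF
  | bot : MF
  | imp : MF → MF → MF
  | box : MF → MF

def MF.neg (φ : MF) : MF := .imp φ .bot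
def MF.top : MF := .imp .bot .bot
def MF.and (φ ψ : MF) : MF := .neg (.imp φ (.neg ψ))
def MF.dia (φ : MF) : MF := .neg (.box (.neg φ))

/-- ⟨b⟩^k φ -/
def MF.diaN : ℕ → MF → MF
  | 0, φ => φ
  | k + 1, φ => .dia (MF.diaN k φ)

/-- Standard Kripke satisfaction over a model (S, R, V). -/
def sat {S : Type} (R : S → S → Prop) (V : ℕ → S → Prop) : S → MF → Prop
  | s, .var p => V p s
  | _, .bot => False
  | s, .imp φ ψ => sat R V s φ → sat R V s ψ
  | s, .box φ => ∀ t, R s t → sat R V t φ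
/-- States of the model M_m: root r, reflexive state t, and s_1, ..., s_m
(here `St.s i` for `i : Fin m` represents the paper's s_{i+1}). -/
inductive St (m : ℕ) : Type where
  | r : St m
  | t : St m
  | s : Fin m → St m

/-- The base relation {(r,t), (t,t), (r,s_1)} ∪ {(s_i, s_{i+1}) : 1 ≤ i ≤ m-1}. -/
def baseRel (m : ℕ) : St m → St m → Prop := fun x y =>
  (x = .r ∧ y = .t) ∨ (x = .t ∧ y = .t) ∨
  (∃ h : 0 < m, x = .r ∧ y = .s ⟨0, h⟩) ∨
  (∃ i j : Fin m, x = .s i ∧ y = .s j ∧ (j : ℕ) = (i : ℕ) + 1)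

/-- R_b: the transitive closure of the base relation. -/
def Rb (m : ℕ) : St m → St m → Prop := Relation.TransGen (baseRel m)

/-- The valuation of M_m: all propositional variables are false everywhere. -/
def Vempty (m : ℕ) : ℕ → St m → Prop := fun _ _ => False

/-- A_m = ⟨b⟩^m [b]⊥ ∧ ¬⟨b⟩^{m+1} [b]⊥ ∧ ⟨b⟩(⟨b⟩⊤ ∧ [b]⟨b⟩⊤). -/
def Aform (m : ℕ) : MF :=
  .and (MF.diaN m (.box .bot))
    (.and (.neg (MF.diaN (m + 1) (.box .bot)))
      (.dia (.and (.dia .top) (.box (.dia .top)))))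

/-- B_m = ⟨b⟩A_m. -/
def Bform (m : ℕ) : MF := .dia (Aform m)

/-!
Every state of `M_k` other than the root is either the reflexive point `t`, which satisfies no
formula `⟨b⟩^j [b]⊥`, or a point `s_i` of the chain, from which the dead end `s_k` is exactly
`k - i` steps away. Hence `⟨b⟩^j [b]⊥` holds at the root iff `1 ≤ j ≤ k`, so the first two
conjuncts of `A_m` pin down `m = k` at the root and exclude `t`. The third conjunct excludes the
chain: it asks for a successor with a successor all of whose successors have successors, and
below every `s_i` with a successor lies the dead end.
-/

section Connectives

variable {S : Type} {R : S → S → Prop} {V : ℕ → S → Prop} {s : S} {φ ψ : MF}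

theorem sat_neg : sat R V s φ.neg ↔ ¬ sat R V s φ := Iff.rfl

theorem sat_top : sat R V s MF.top := id

theorem sat_and : sat R V s (φ.and ψ) ↔ sat R V s φ ∧ sat R V s ψ := by
  simp only [MF.and, MF.neg, sat]
  tauto

theorem sat_dia : sat R V s φ.dia ↔ ∃ t, R s t ∧ sat R V t φ := by
  simp only [MF.dia, MF.neg, sat, imp_false, not_forall, not_not, exists_prop]

end Connectives

namespace St

variable {k : ℕ}

theorem exists_iff {p : St k → Prop} : (∃ x, p x) ↔ p r ∨ p t ∨ ∃ i, p (s i) := by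
  constructor
  · rintro ⟨_ | _ | i, hx⟩
    exacts [.inl hx, .inr (.inl hx), .inr (.inr ⟨i, hx⟩)]
  · rintro (h | h | ⟨i, h⟩) <;> exact ⟨_, h⟩

theorem forall_iff {p : St k → Prop} : (∀ x, p x) ↔ p r ∧ p t ∧ ∀ i, p (s i) := by
  constructor
  · exact fun h => ⟨h r, h t, fun i => h (s i)⟩
  · rintro ⟨hr, ht, hs⟩ (_ | _ | i)
    exacts [hr, ht, hs i]

def Reach : St k → St k → Prop
  | r, t | r, s _ | t, t => True
  | s i, s j => i < j
  | _, _ => False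

theorem reach_of_baseRel {x y : St k} (h : baseRel k x y) : Reach x y := by
  rcases h with ⟨rfl, rfl⟩ | ⟨rfl, rfl⟩ | ⟨_, rfl, rfl⟩ | ⟨i, j, rfl, rfl, hij⟩
  · trivial
  · trivial
  · trivial
  · change i < j
    omega

theorem Reach.trans {x y z : St k} (hxy : Reach x y) (hyz : Reach y z) : Reach x z := by
  cases x <;> cases y <;> cases z <;> simp_all only [Reach]
  exact hxy.trans hyz

end St

open St

section Frame

variable {k : ℕ}

theorem rb_s_s {i j : Fin k} (hij : i < j) : Rb k (s i) (s j) := by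
  obtain ⟨j, hj⟩ := j
  induction j with
  | zero => exact absurd (Fin.lt_def.mp hij) (Nat.not_lt_zero _)
  | succ j ih =>
    have step : baseRel k (s ⟨j, by omega⟩) (s ⟨j + 1, hj⟩) :=
      Or.inr <| Or.inr <| Or.inr ⟨_, _, rfl, rfl, rfl⟩
    rcases Nat.lt_succ_iff_lt_or_eq.mp (Fin.lt_def.mp hij) with hlt | heq
    · exact (ih (by omega) hlt).tail step
    · rw [show i = ⟨j, by omega⟩ from Fin.ext heq]
      exact .single step

theorem rb_r_s (j : Fin k) : Rb k r (s j) := by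
  have hk : 0 < k := j.pos
  have first : Rb k r (s ⟨0, hk⟩) := .single <| Or.inr <| Or.inr <| Or.inl ⟨hk, rfl, rfl⟩
  rcases Nat.eq_zero_or_pos j with hj | hj
  · rwa [show j = ⟨0, hk⟩ from Fin.ext hj]
  · exact first.trans (rb_s_s hj)

theorem rb_iff_reach {x y : St k} : Rb k x y ↔ Reach x y := by
  constructor
  · intro h
    induction h with
    | single h => exact reach_of_baseRel h
    | tail _ hb ih => exact ih.trans (reach_of_baseRel hb)
  · cases x <;> cases y <;> simp only [Reach, false_imp_iff, forall_const]
    · exact .single (Or.inl ⟨rfl, rfl⟩)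
    · exact rb_r_s _
    · exact .single (Or.inr (Or.inl ⟨rfl, rfl⟩))
    · exact rb_s_s

variable {V : ℕ → St k → Prop} {φ : MF}

theorem sat_dia_r : sat (Rb k) V r φ.dia ↔ sat (Rb k) V t φ ∨ ∃ j, sat (Rb k) V (s j) φ := by
  simp [sat_dia, exists_iff, rb_iff_reach, Reach]

theorem sat_dia_t : sat (Rb k) V t φ.dia ↔ sat (Rb k) V t φ := by
  simp [sat_dia, exists_iff, rb_iff_reach, Reach]

theorem sat_dia_s {i : Fin k} : sat (Rb k) V (s i) φ.dia ↔ ∃ j, i < j ∧ sat (Rb k) V (s j) φ := by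
  simp [sat_dia, exists_iff, rb_iff_reach, Reach]

theorem sat_box_t : sat (Rb k) V t φ.box ↔ sat (Rb k) V t φ := by
  simp [sat, forall_iff, rb_iff_reach, Reach]

theorem sat_box_s {i : Fin k} : sat (Rb k) V (s i) φ.box ↔ ∀ j, i < j → sat (Rb k) V (s j) φ := by
  simp [sat, forall_iff, rb_iff_reach, Reach]

end Frame

section Formulas

variable {k : ℕ} {V : ℕ → St k → Prop}

theorem sat_box_bot_s {i : Fin k} : sat (Rb k) V (s i) (.box .bot) ↔ (i : ℕ) + 1 = k := by
  rw [sat_box_s]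
  simp only [sat, Fin.lt_def, imp_false, not_lt]
  constructor
  · intro h
    by_contra hi
    exact absurd (h ⟨i + 1, by omega⟩) (by simp)
  · intro h j
    omega

theorem not_sat_diaN_box_bot_t (j : ℕ) : ¬ sat (Rb k) V t (MF.diaN j (.box .bot)) := by
  induction j with
  | zero => exact fun h => h t (rb_iff_reach.mpr trivial)
  | succ j ih => rwa [MF.diaN, sat_dia_t]

theorem sat_diaN_succ_box_bot_s {i : Fin k} (j : ℕ) :
    sat (Rb k) V (s i) (MF.diaN (j + 1) (.box .bot)) ↔ (i : ℕ) + j + 1 < k := by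
  induction j generalizing i with
  | zero =>
    simp only [MF.diaN, sat_dia_s, sat_box_bot_s, Fin.lt_def]
    constructor
    · rintro ⟨j, hij, hj⟩
      omega
    · intro hi
      exact ⟨⟨k - 1, by omega⟩, by simp only; omega, by simp only; omega⟩
  | succ j ih =>
    rw [MF.diaN, sat_dia_s]
    simp only [ih, Fin.lt_def]
    constructor
    · rintro ⟨l, hil, hl⟩
      omega
    · intro hi
      exact ⟨⟨i + 1, by omega⟩, by simp only; omega, by simp only; omega⟩

theorem sat_diaN_succ_box_bot_r (j : ℕ) :
    sat (Rb k) V r (MF.diaN (j + 1) (.box .bot)) ↔ j < k := by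
  rw [MF.diaN, sat_dia_r, or_iff_right (not_sat_diaN_box_bot_t j)]
  cases j with
  | zero =>
    simp only [MF.diaN, sat_box_bot_s]
    constructor
    · rintro ⟨i, hi⟩
      omega
    · intro hk
      exact ⟨⟨k - 1, by omega⟩, by simp only; omega⟩
  | succ j =>
    simp only [sat_diaN_succ_box_bot_s]
    constructor
    · rintro ⟨i, hi⟩
      omega
    · intro hj
      exact ⟨⟨0, by omega⟩, by simp only; omega⟩

theorem sat_dia_top_s {i : Fin k} : sat (Rb k) V (s i) (.dia .top) ↔ (i : ℕ) + 1 < k := by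
  simp only [sat_dia_s, sat_top, and_true, Fin.lt_def]
  constructor
  · rintro ⟨j, hij⟩
    omega
  · intro hi
    exact ⟨⟨i + 1, by omega⟩, by simp only; omega⟩

theorem sat_dia_top_t : sat (Rb k) V t (.dia .top) := sat_dia_t.mpr sat_top

theorem sat_dia_and_dia_top_box_dia_top_r :
    sat (Rb k) V r (.dia (.and (.dia .top) (.box (.dia .top)))) :=
  sat_dia_r.mpr <| .inl <| sat_and.mpr ⟨sat_dia_top_t, sat_box_t.mpr sat_dia_top_t⟩

theorem not_sat_dia_and_dia_top_box_dia_top_s {i : Fin k} :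
    ¬ sat (Rb k) V (s i) (.dia (.and (.dia .top) (.box (.dia .top)))) := by
  rw [sat_dia_s]
  rintro ⟨j, -, hj⟩
  rw [sat_and, sat_dia_top_s, sat_box_s] at hj
  obtain ⟨hj_succ, hj_all⟩ := hj
  have hlast := hj_all ⟨k - 1, by omega⟩ (by simp only [Fin.lt_def]; omega)
  rw [sat_dia_top_s] at hlast
  simp only at hlast
  omega

end Formulas

theorem stmt2_general (k m : ℕ) (hm : 1 ≤ m) (x : St k) :
    sat (Rb k) (Vempty k) x (Aform m) ↔ k = m ∧ x = St.r := by
  obtain ⟨n, rfl⟩ : ∃ n, m = n + 1 := ⟨m - 1, by omega⟩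
  rw [Aform, sat_and, sat_and, sat_neg]
  cases x with
  | r =>
    simp only [sat_diaN_succ_box_bot_r, sat_dia_and_dia_top_box_dia_top_r, and_true]
    omega
  | t => simp [not_sat_diaN_box_bot_t]
  | s i => simp [not_sat_dia_and_dia_top_box_dia_top_s]

/-- In the model M_k, a state x satisfies A_m iff k = m and x is the root r_k. -/
theorem stmt2 (k m : ℕ) (hk : 1 ≤ k) (hm : 1 ≤ m) (x : St k) :
    sat (Rb k) (Vempty k) x (Aform m) ↔ k = m ∧ x = St.r :=
  stmt2_general k m hm x
end

section
/- Relativization lemma: let M = (S, R, V) be a Kripke model, p a propositional variable, and let M' be the submodel of M generated from a state s_0 ⊨ p by the rule: s_0 ∈ S', and if x ∈ S', x R y, and M, y ⊨ p, then y ∈ S' (with the relation restricted to S'). Define the translation φ' by: q' = q for variables, ⊥' = ⊥, (φ→ψ)' = φ'→ψ', and ([b]φ)' = [b](p → φ'). Then for every formula φ not containing p and every state s ∈ S': M, s ⊨ φ' if and only if M', s ⊨ φ. -/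
/-- The relativized translation: ([b]φ)' = [b](p → φ'). -/
def relT (p : ℕ) : MF → MF
  | .var q => .var q
  | .bot => .bot
  | .imp a b => .imp (relT p a) (relT p b)
  | .box a => .box (.imp (.var p) (relT p a))

/-- The variable q occurs in a formula. -/
def occurs (q : ℕ) : MF → Prop
  | .var r => r = q
  | .bot => False
  | .imp a b => occurs q a ∨ occurs q b
  | .box a => occurs q a

/-- The smallest subset of S containing s0 and closed under:
x ∈ S', x R y, y ⊨ p implies y ∈ S'. -/
inductive Gen {S : Type} (R : S → S → Prop) (V : ℕ → S → Prop) (p : ℕ) (s0 : S) : S → Prop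
  | base : Gen R V p s0 s0
  | step {x y : S} : Gen R V p s0 x → R x y → V p y → Gen R V p s0 y

/-! A submodel consisting of `p`-states and containing every `p`-successor of its states is
exactly what the guard in `[b](p → φ')` sees: the guarded box ranges over the successors
that lie in the submodel. -/

section Relativization

variable {S : Type} {R : S → S → Prop} {V : ℕ → S → Prop} {p : ℕ}

theorem sat_relT_iff_sat_subtype {U : S → Prop} (hU : ∀ x, U x → V p x)
    (hclosed : ∀ x y, U x → R x y → V p y → U y) (φ : MF) (s : {x // U x}) :
    sat R V s.1 (relT p φ) ↔ sat (fun a b : {x // U x} => R a.1 b.1) (fun q a => V q a.1) s φ := by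
  induction φ generalizing s with
  | var q => rfl
  | bot => rfl
  | imp a b iha ihb => exact imp_congr (iha s) (ihb s)
  | box a ih =>
    constructor
    · intro h t hst
      exact (ih t).mp (h t.1 hst (hU t.1 t.2))
    · intro h t hst hpt
      exact (ih ⟨t, hclosed s.1 t s.2 hst hpt⟩).mpr (h _ hst)

theorem Gen.V_p {s0 : S} (hs0 : V p s0) {x : S} (hx : Gen R V p s0 x) : V p x := by
  cases hx with
  | base => exact hs0
  | step _ _ hp => exact hp

end Relativization

theorem stmt8_general {S : Type} (R : S → S → Prop) (V : ℕ → S → Prop) (p : ℕ)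
    (s0 : S) (hs0 : V p s0) (φ : MF)
    (s : {x // Gen R V p s0 x}) :
    sat R V s.1 (relT p φ) ↔
      sat (fun a b : {x // Gen R V p s0 x} => R a.1 b.1) (fun q a => V q a.1) s φ :=
  sat_relT_iff_sat_subtype (fun _ hx => hx.V_p hs0) (fun _ _ hx hxy hy => hx.step hxy hy) φ s

/-- Relativization lemma: for every formula φ not containing p and every
state s of the generated submodel M', M, s ⊨ φ' iff M', s ⊨ φ. -/
theorem stmt8 {S : Type} (R : S → S → Prop) (V : ℕ → S → Prop) (p : ℕ)
    (s0 : S) (hs0 : V p s0) (φ : MF) (hφ : ¬ occurs p φ)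
    (s : {x // Gen R V p s0 x}) :
    sat R V s.1 (relT p φ) ↔
      sat (fun a b : {x // Gen R V p s0 x} => R a.1 b.1) (fun q a => V q a.1) s φ :=
  stmt8_general R V p s0 hs0 φ s
end

section
/- Let φ be a basic modal formula whose variables are among p_1, ..., p_n, let p = p_{n+1} be fresh, let φ' be the relativized translation ([b]ψ becomes [b](p → ψ')), and let Θ = p ∧ [b*](⟨b⟩p → p), where [b*]χ means χ holds at all states reachable from the current state by the reflexive-transitive closure of R_b. Then φ is satisfiable if and only if Θ ∧ φ' is satisfiable. -/
/-- Modal formulas with the iteration modality [b*]. -/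
inductive MFs : Type where
  | var : ℕ → MFs
  | bot : MFs
  | imp : MFs → MFs → MFs
  | box : MFs → MFs
  | boxS : MFs → MFs

def MFs.neg (φ : MFs) : MFs := .imp φ .bot
def MFs.top : MFs := .imp .bot .bot
def MFs.and (φ ψ : MFs) : MFs := .neg (.imp φ (.neg ψ))
def MFs.dia (φ : MFs) : MFs := .neg (.box (.neg φ))

/-- Satisfaction with [b*] interpreted via the reflexive-transitive closure. -/
def sats {S : Type} (R : S → S → Prop) (V : ℕ → S → Prop) : S → MFs → Prop
  | s, .var p => V p s
  | _, .bot => False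
  | s, .imp φ ψ => sats R V s φ → sats R V s ψ
  | s, .box φ => ∀ t, R s t → sats R V t φ
  | s, .boxS φ => ∀ t, Relation.ReflTransGen R s t → sats R V t φ

/-- Embedding of basic modal formulas into the language with [b*]. -/
def embed : MF → MFs
  | .var q => .var q
  | .bot => .bot
  | .imp a b => .imp (embed a) (embed b)
  | .box a => .box (embed a)

/-- Θ = p_{n+1} ∧ [b*](⟨b⟩p_{n+1} → p_{n+1}); the fresh variable p_{n+1}
is represented by `MFs.var n` (variables p_1, ..., p_n are var 0, ..., var (n-1)). -/
def Theta (n : ℕ) : MFs :=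
  MFs.and (.var n) (.boxS (.imp (MFs.dia (.var n)) (.var n)))

/-- All variables of φ are among p_1, ..., p_n (i.e. var 0, ..., var (n-1)). -/
def varsLt (n : ℕ) (φ : MF) : Prop := ∀ q : ℕ, occurs q φ → q < n

/-!
Left to right: make the fresh variable `p` true everywhere. Then `Θ` holds trivially, the guards
`p → _` in `φ'` are vacuous, and `φ` does not see `p`. Right to left: `φ'` holding at `s` in
`(S, R, V)` says exactly that `φ` holds at `s` once `R` is restricted to arrows ending in `p`-states.
-/

theorem sat_congr_val {S : Type} (R : S → S → Prop) {V W : ℕ → S → Prop} (φ : MF)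
    (h : ∀ q, occurs q φ → V q = W q) (s : S) : sat R V s φ ↔ sat R W s φ := by
  induction φ generalizing s with
  | var q => simp only [sat, h q rfl]
  | bot => rfl
  | imp a b iha ihb =>
    exact imp_congr (iha (fun q hq => h q (Or.inl hq)) s) (ihb (fun q hq => h q (Or.inr hq)) s)
  | box a ih => exact forall₂_congr fun t _ => ih h t

theorem sats_embed_relT_iff {S : Type} (R : S → S → Prop) (V : ℕ → S → Prop) (p : ℕ)
    (φ : MF) (s : S) :
    sats R V s (embed (relT p φ)) ↔ sat (fun a b => R a b ∧ V p b) V s φ := by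
  induction φ generalizing s with
  | var q => rfl
  | bot => rfl
  | imp a b iha ihb => exact imp_congr (iha s) (ihb s)
  | box a ih =>
    simp only [relT, embed, sats, sat, and_imp]
    exact forall₃_congr fun t _ _ => ih t

theorem sats_embed_relT_iff_of_forall {S : Type} (R : S → S → Prop) {V : ℕ → S → Prop} {p : ℕ}
    (hp : ∀ t, V p t) (φ : MF) (s : S) : sats R V s (embed (relT p φ)) ↔ sat R V s φ := by
  have hR : (fun a b => R a b ∧ V p b) = R := by
    funext a b
    simp only [hp, and_true]
  rw [sats_embed_relT_iff, hR]

theorem sats_and {S : Type} {R : S → S → Prop} {V : ℕ → S → Prop} {s : S} {a b : MFs} :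
    sats R V s (MFs.and a b) ↔ sats R V s a ∧ sats R V s b := by
  simp only [MFs.and, MFs.neg, sats]
  tauto

theorem sats_Theta_of_forall {S : Type} (R : S → S → Prop) {V : ℕ → S → Prop} {n : ℕ}
    (hn : ∀ t, V n t) (s : S) : sats R V s (Theta n) :=
  sats_and.2 ⟨hn s, fun t _ _ => hn t⟩

/-- φ is satisfiable iff Θ ∧ φ' is satisfiable, where φ' is the relativized
translation of φ with respect to the fresh variable p_{n+1}. -/
theorem stmt10 (n : ℕ) (φ : MF) (hφ : varsLt n φ) :
    (∃ (S : Type) (R : S → S → Prop) (V : ℕ → S → Prop) (s : S), sat R V s φ) ↔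
    (∃ (S : Type) (R : S → S → Prop) (V : ℕ → S → Prop) (s : S),
      sats R V s (MFs.and (Theta n) (embed (relT n φ)))) := by
  constructor
  · rintro ⟨S, R, V, s, hs⟩
    set W := Function.update V n fun _ => True
    have hWn : ∀ t, W n t := by simp [W]
    have hsW : sat R W s φ :=
      (sat_congr_val R φ (fun q hq => (Function.update_of_ne (hφ q hq).ne _ _).symm) s).1 hs
    exact ⟨S, R, W, s,
      sats_and.2 ⟨sats_Theta_of_forall R hWn s, (sats_embed_relT_iff_of_forall R hWn φ s).2 hsW⟩⟩
  · rintro ⟨S, R, V, s, hs⟩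
    exact ⟨S, _, V, s, (sats_embed_relT_iff R V n φ s).1 (sats_and.1 hs).2⟩
end
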